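/- If P is a strictly positive vector in X_A with support F = {1,...,m} restricted to where P > 0, then the system of linear equations ∑_{i=1}^d a_{ij} τ_i = log(p_j) for j ∈ F has a real solution (τ_1,...,τ_d). Equivalently, the system ∏_{i=1}^d t_i^{a_{ij}} = p_j (j ∈ F) has a solution with all t_i > 0. -/

import Mathlib

/-!
Since `A` has integer entries, the obstruction to solving `∑ᵢ a_{ij} τᵢ = log p_j` (`j ∈ F`) is
integral: `ℝ` is divisible, hence an injective `ℤ`-module, so a `ℤ`-linear functional
`z ↦ ∑ⱼ zⱼ log pⱼ` on `ℤ^F` factors through `z ↦ A z` as soon as it kills every integer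
relation `A z = 0`. Splitting such a `z` as `u - v` with `u, v ∈ ℕ^F` gives `A u = A v`, so
`P^u = P^v` because `P ∈ X_A`, and taking logarithms gives `∑ⱼ zⱼ log pⱼ = 0`.
-/

open Matrix

theorem Module.Baer.exists_comp_eq_of_ker_le {R M N Q : Type*} [Ring R] [AddCommGroup M]
    [AddCommGroup N] [AddCommGroup Q] [Module R M] [Module R N] [Module R Q]
    (hQ : Module.Baer R Q) (f : M →ₗ[R] N) (g : M →ₗ[R] Q)
    (hfg : LinearMap.ker f ≤ LinearMap.ker g) : ∃ h : N →ₗ[R] Q, h ∘ₗ f = g := by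
  obtain ⟨h, hh⟩ := hQ.extension_property (LinearMap.range f).subtype
    (Submodule.injective_subtype _)
    ((LinearMap.ker f).liftQ g hfg ∘ₗ f.quotKerEquivRange.symm.toLinearMap)
  refine ⟨h, LinearMap.ext fun x => ?_⟩
  simpa [LinearMap.quotKerEquivRange_symm_apply_image] using
    LinearMap.congr_fun hh ⟨f x, LinearMap.mem_range_self f x⟩

theorem Matrix.exists_sum_mul_eq_of_forall_mulVec_eq_zero {κ ι : Type*} [Fintype κ]
    [Fintype ι] (B : Matrix κ ι ℤ) (b : ι → ℝ)
    (hB : ∀ z, B *ᵥ z = 0 → ∑ j, (z j : ℝ) * b j = 0) :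
    ∃ τ : κ → ℝ, ∀ j, ∑ i, (B i j : ℝ) * τ i = b j := by
  classical
  obtain ⟨h, hh⟩ := (Module.Baer.of_divisible ℝ).exists_comp_eq_of_ker_le B.mulVecLin
    (Fintype.linearCombination ℤ b) fun z hz => by
      simpa [Fintype.linearCombination_apply, zsmul_eq_mul] using hB z hz
  refine ⟨fun i => h fun k => if i = k then 1 else 0, fun j => ?_⟩
  have hj := LinearMap.congr_fun hh (Pi.single j 1)
  rw [LinearMap.comp_apply, mulVecLin_apply, mulVec_single_one,
    LinearMap.pi_apply_eq_sum_univ] at hj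
  simpa [Fintype.linearCombination_apply_single] using hj

theorem Real.log_prod_pow {ι : Type*} [Fintype ι] (P : ι → ℝ) (u : ι → ℕ)
    (hu : ∀ j, P j = 0 → u j = 0) :
    Real.log (∏ j, P j ^ u j) = ∑ j, (u j : ℝ) * Real.log (P j) := by
  rw [Real.log_prod fun j _ => ?_]
  · simp only [Real.log_pow]
  · by_cases hj : P j = 0
    · simp [hj, hu j hj]
    · exact pow_ne_zero _ hj

/-- `X_A` is the set of nonnegative points satisfying these binomial equations. -/
def SatisfiesToricBinomials {κ ι : Type*} [Fintype ι] (A : Matrix κ ι ℕ) (P : ι → ℝ) : Prop :=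
  ∀ u v : ι → ℕ, (∀ i, ∑ j, A i j * u j = ∑ j, A i j * v j) → ∏ j, P j ^ u j = ∏ j, P j ^ v j

namespace SatisfiesToricBinomials

variable {κ ι : Type*} [Fintype ι] {A : Matrix κ ι ℕ} {P : ι → ℝ}

theorem sum_mul_log_eq_zero (hX : SatisfiesToricBinomials A P) (z : ι → ℤ)
    (hz : A.map (↑) *ᵥ z = 0) (hsupp : ∀ j, P j = 0 → z j = 0) :
    ∑ j, (z j : ℝ) * Real.log (P j) = 0 := by
  set u : ι → ℕ := fun j => (z j).toNat
  set v : ι → ℕ := fun j => (-z j).toNat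
  have huv : ∀ j, (u j : ℤ) - v j = z j := fun j => Int.toNat_sub_toNat_neg (z j)
  have hAuv : ∀ i, ∑ j, A i j * u j = ∑ j, A i j * v j := by
    intro i
    have hi : ∑ j, (A i j : ℤ) * z j = 0 := congrFun hz i
    zify
    simpa only [← huv, mul_sub, Finset.sum_sub_distrib, sub_eq_zero] using hi
  have hlog := congrArg Real.log (hX u v hAuv)
  rw [Real.log_prod_pow P u (by simp +contextual [u, hsupp]),
    Real.log_prod_pow P v (by simp +contextual [v, hsupp])] at hlog
  simp only [← huv, Int.cast_sub, Int.cast_natCast, sub_mul, Finset.sum_sub_distrib, hlog,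
    sub_self]

theorem exists_sum_mul_eq_log [Fintype κ] (hX : SatisfiesToricBinomials A P) :
    ∃ τ : κ → ℝ, ∀ j, P j ≠ 0 → ∑ i, (A i j : ℝ) * τ i = Real.log (P j) := by
  classical
  let mask (z : ι → ℤ) : ι → ℤ := fun j => if P j = 0 then 0 else z j
  let B : Matrix κ ι ℤ := fun i j => if P j = 0 then 0 else A i j
  have hB : ∀ z, B *ᵥ z = A.map (↑) *ᵥ mask z := fun z => by
    ext i
    refine Finset.sum_congr rfl fun j _ => ?_
    by_cases hj : P j = 0 <;> simp [B, mask, hj]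
  -- masking is invisible to the right-hand side because `Real.log 0 = 0`
  have hlog : ∀ z, ∑ j, (z j : ℝ) * Real.log (P j) = ∑ j, (mask z j : ℝ) * Real.log (P j) :=
    fun z => Finset.sum_congr rfl fun j _ => by by_cases hj : P j = 0 <;> simp [mask, hj]
  obtain ⟨τ, hτ⟩ := B.exists_sum_mul_eq_of_forall_mulVec_eq_zero (fun j => Real.log (P j))
    fun z hz => by
      rw [hlog]
      exact hX.sum_mul_log_eq_zero (mask z) (hB z ▸ hz) (by simp +contextual [mask])
  exact ⟨τ, fun j hj => by simpa [B, hj] using hτ j⟩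

end SatisfiesToricBinomials

/-- If `P ∈ X_A` has support `F`, then the linear system
`∑ᵢ a_{ij} τᵢ = log pⱼ` (for `j ∈ F`) has a real solution; equivalently
`∏ᵢ tᵢ^{a_{ij}} = pⱼ` (for `j ∈ F`) has a solution with all `tᵢ > 0`. -/
theorem toric_point_log_linear_solvable {d m : ℕ} (A : Matrix (Fin d) (Fin m) ℕ)
    (P : Fin m → ℝ) (hP : ∀ j, 0 ≤ P j)
    (hX : ∀ u v : Fin m → ℕ, (∀ i, ∑ j, A i j * u j = ∑ j, A i j * v j) →
      ∏ j, P j ^ u j = ∏ j, P j ^ v j) :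
    (∃ τ : Fin d → ℝ, ∀ j, P j ≠ 0 → ∑ i, (A i j : ℝ) * τ i = Real.log (P j)) ∧
      (∃ t : Fin d → ℝ, (∀ i, 0 < t i) ∧ ∀ j, P j ≠ 0 → ∏ i, t i ^ A i j = P j) := by
  obtain ⟨τ, hτ⟩ := SatisfiesToricBinomials.exists_sum_mul_eq_log (κ := Fin d) hX
  refine ⟨⟨τ, hτ⟩, fun i => Real.exp (τ i), fun i => Real.exp_pos _, fun j hj => ?_⟩
  calc ∏ i, Real.exp (τ i) ^ A i j
      = Real.exp (∑ i, (A i j : ℝ) * τ i) := by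
        simp only [← Real.exp_nat_mul, Real.exp_sum]
    _ = P j := by rw [hτ j hj, Real.exp_log ((hP j).lt_of_ne' hj)]
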